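/- Let k ≥ 1 and d ≥ k be integers, S = {1,…,k}, and let x be uniformly distributed on the Boolean cube {−1,+1}^d. Let φ(z) = max(z,0) (ReLU), χ_S(x) = ∏_{j∈S} x_j, and for w ∈ ℝ^d define Σ(w) = E_x[φ(w·x)²] and J_S(w) = E_x[φ(w·x)·χ_S(x)]. Define the constants D_k := 2^{−k}·∑_{r=0}^{⌊(k−1)/2⌋} binom(k,r)·(k−2r)·(−1)^r and C_k := 2^{−k}·∑_{r=0}^{⌊(k−1)/2⌋} binom(k,r)·(k−2r)². Then for every α > 0 and the weight vector w with w_j = α for j ∈ S and w_j = 0 for j ∉ S, one has J_S(w) = α·D_k and Σ(w) = α²·C_k; consequently, whenever C_k ≠ 0, the ratio J_S(w)²/Σ(w) = D_k²/C_k =: R_k is independent of the scale α. -/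

import Mathlib

/-!
With `x = (if ε j then 1 else -1)_j`, let `r` be the number of coordinates `j ∈ S` with `x_j = -1`.
Then `w · x = α (k - 2r)` and `χ_S(x) = (-1)^r`, so both expectations are expectations of a function
of `r`, which is `Binomial(k, 1/2)`: the coordinates outside `S` only contribute a factor
`2^(d - k)`. Since `α > 0`, the ReLU keeps exactly the terms with `2r < k`, i.e. `r ≤ (k - 1) / 2`,
and the scale factors out as `α` and `α²`.
-/

/-- Expectation of `f` over `x` uniform on the Boolean cube `{−1,+1}^d`. -/
noncomputable def cubeE (d : ℕ) (f : (Fin d → ℝ) → ℝ) : ℝ :=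
  (∑ ε : Fin d → Bool, f fun j => if ε j then 1 else -1) / 2 ^ d

/-- Neuron self-energy Σ(w) = E_x[φ(w·x)²] with φ = ReLU. -/
noncomputable def SigmaFun (d : ℕ) (w : Fin d → ℝ) : ℝ :=
  cubeE d fun x => max (∑ j, w j * x j) 0 ^ 2

/-- Neuron–feature coupling J_A(w) = E_x[φ(w·x)·χ_A(x)] with φ = ReLU. -/
noncomputable def Jfun (d : ℕ) (A : Finset (Fin d)) (w : Fin d → ℝ) : ℝ :=
  cubeE d fun x => max (∑ j, w j * x j) 0 * ∏ i ∈ A, x i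

open Finset

section BooleanFunctions

variable {ι : Type*} [Fintype ι] [DecidableEq ι]

lemma sum_boolFun_card_filter_false (F : ℕ → ℝ) :
    ∑ a : ι → Bool, F #{j | a j = false}
      = ∑ r ∈ range (Fintype.card ι + 1), ((Fintype.card ι).choose r : ℝ) * F r := by
  let e : (ι → Bool) ≃ Finset ι :=
    { toFun := fun a => {j | a j = false}
      invFun := fun s j => decide (j ∉ s)
      left_inv := fun a => by funext j; cases h : a j <;> simp [h]
      right_inv := fun s => by ext j; simp }
  refine (Fintype.sum_equiv e _ (fun s => F #s) fun _ => rfl).trans ?_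
  rw [← powerset_univ, sum_powerset_apply_card, card_univ]
  simp only [nsmul_eq_mul]

lemma sum_boolFun_comp_restrict (p : ι → Prop) [DecidablePred p]
    (G : ({j // p j} → Bool) → ℝ) :
    ∑ ε : ι → Bool, G (fun j => ε j) = 2 ^ Fintype.card {j // ¬ p j} * ∑ a, G a := by
  rw [← (Equiv.piEquivPiSubtypeProd p fun _ => Bool).symm.sum_comp, Fintype.sum_prod_type]
  have hrestrict (a : {j // p j} → Bool) (b : {j // ¬ p j} → Bool) :
      (fun j : {j // p j} => (Equiv.piEquivPiSubtypeProd p fun _ => Bool).symm (a, b) j) = a := by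
    funext j; simp [Equiv.piEquivPiSubtypeProd_symm_apply, j.2]
  simp only [hrestrict, sum_const, card_univ, Fintype.card_fun, Fintype.card_bool, nsmul_eq_mul,
    Nat.cast_pow, Nat.cast_ofNat, mul_sum]

lemma sum_boolFun_card_filter (S : Finset ι) (F : ℕ → ℝ) :
    ∑ ε : ι → Bool, F #{j ∈ S | ε j = false}
      = 2 ^ (Fintype.card ι - #S) * ∑ r ∈ range (#S + 1), ((#S).choose r : ℝ) * F r := by
  have hcount (ε : ι → Bool) : #{j ∈ S | ε j = false} = #{j : S | ε j = false} := by
    simp only [card_filter]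
    exact (sum_coe_sort S _).symm
  simp_rw [hcount]
  rw [sum_boolFun_comp_restrict (· ∈ S) fun a => F #{j | a j = false},
    Fintype.card_subtype_compl, Fintype.card_coe]
  congr 1
  convert sum_boolFun_card_filter_false (ι := S) F using 3 <;> simp

end BooleanFunctions

section Signs

variable {ι : Type*}

lemma sum_sign_eq (S : Finset ι) (ε : ι → Bool) :
    ∑ j ∈ S, (if ε j then (1 : ℝ) else -1) = #S - 2 * #{j ∈ S | ε j = false} := by
  have h (j : ι) : (if ε j then (1 : ℝ) else -1) = 1 - 2 * if ε j = false then 1 else 0 := by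
    cases ε j <;> norm_num
  simp only [h, sum_sub_distrib, ← mul_sum, sum_boole, sum_const, nsmul_one]

lemma prod_sign_eq (S : Finset ι) (ε : ι → Bool) :
    ∏ j ∈ S, (if ε j then (1 : ℝ) else -1) = (-1) ^ #{j ∈ S | ε j = false} := by
  simp [prod_ite]

end Signs

lemma cubeE_eq_sum_choose {d : ℕ} (S : Finset (Fin d)) (f : (Fin d → ℝ) → ℝ) (F : ℕ → ℝ)
    (hf : ∀ ε : Fin d → Bool, f (fun j => if ε j then 1 else -1) = F #{j ∈ S | ε j = false}) :
    cubeE d f = 2 ^ (-(#S : ℤ)) * ∑ r ∈ range (#S + 1), ((#S).choose r : ℝ) * F r := by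
  have hS : #S ≤ d := by simpa using card_le_univ S
  have hpow : (2 : ℝ) ^ d = 2 ^ (d - #S) * 2 ^ #S := by rw [← pow_add, Nat.sub_add_cancel hS]
  rw [cubeE, Fintype.sum_congr _ _ hf, sum_boolFun_card_filter, Fintype.card_fin, hpow, zpow_neg,
    zpow_natCast]
  field_simp

lemma sum_range_relu_eq (k : ℕ) (G : ℕ → ℝ → ℝ) (hG : ∀ r, G r 0 = 0) :
    ∑ r ∈ range (k + 1), G r (max ((k : ℝ) - 2 * r) 0)
      = ∑ r ∈ range ((k - 1) / 2 + 1), G r ((k : ℝ) - 2 * r) := by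
  -- `(k - 1) / 2` is the largest `r` with `2 * r < k`; for `k = 0` the only term is `G 0 0`.
  symm
  refine sum_subset_zero_on_sdiff (range_subset_range.mpr (by omega)) ?_ ?_
  · intro r hr
    simp only [mem_sdiff, mem_range] at hr
    have : (k : ℝ) ≤ 2 * r := by exact_mod_cast (by omega : k ≤ 2 * r)
    rw [max_eq_right (by linarith), hG]
  · intro r hr
    simp only [mem_range] at hr
    have : (2 * r : ℝ) ≤ k := by exact_mod_cast (by omega : 2 * r ≤ k)
    rw [max_eq_left (by linarith)]

lemma max_mul_zero_of_nonneg {R : Type*} [Semiring R] [LinearOrder R] [PosMulMono R] {a : R}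
    (ha : 0 ≤ a) (b : R) : max (a * b) 0 = a * max b 0 := by
  rw [mul_max_of_nonneg _ _ ha, mul_zero]

lemma sum_indicator_mul_sign_eq {d : ℕ} (S : Finset (Fin d)) (α : ℝ) (ε : Fin d → Bool) :
    ∑ j, (if j ∈ S then α else 0) * (if ε j then 1 else -1)
      = α * ((#S : ℝ) - 2 * #{j ∈ S | ε j = false}) := by
  simp only [ite_mul, zero_mul, sum_ite_mem, univ_inter, ← mul_sum, sum_sign_eq]

lemma Jfun_indicator_eq {d : ℕ} (S : Finset (Fin d)) {α : ℝ} (hα : 0 ≤ α) :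
    Jfun d S (fun j => if j ∈ S then α else 0)
      = α * (2 ^ (-(#S : ℤ)) * ∑ r ∈ range ((#S - 1) / 2 + 1),
          ((#S).choose r : ℝ) * ((#S : ℝ) - 2 * r) * (-1) ^ r) := by
  rw [Jfun, cubeE_eq_sum_choose S _ fun r => α * max ((#S : ℝ) - 2 * r) 0 * (-1) ^ r,
    sum_range_relu_eq _ (fun r t => ((#S).choose r : ℝ) * (α * t * (-1) ^ r)) (by simp)]
  · simp only [mul_sum]
    exact sum_congr rfl fun r _ => by ring
  · intro ε
    rw [sum_indicator_mul_sign_eq, prod_sign_eq, max_mul_zero_of_nonneg hα]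

lemma SigmaFun_indicator_eq {d : ℕ} (S : Finset (Fin d)) {α : ℝ} (hα : 0 ≤ α) :
    SigmaFun d (fun j => if j ∈ S then α else 0)
      = α ^ 2 * (2 ^ (-(#S : ℤ)) * ∑ r ∈ range ((#S - 1) / 2 + 1),
          ((#S).choose r : ℝ) * ((#S : ℝ) - 2 * r) ^ 2) := by
  rw [SigmaFun, cubeE_eq_sum_choose S _ fun r => α ^ 2 * max ((#S : ℝ) - 2 * r) 0 ^ 2,
    sum_range_relu_eq _ (fun r t => ((#S).choose r : ℝ) * (α ^ 2 * t ^ 2)) (by simp)]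
  · simp only [mul_sum]
    exact sum_congr rfl fun r _ => by ring
  · intro ε
    rw [sum_indicator_mul_sign_eq, max_mul_zero_of_nonneg hα, mul_pow]

theorem stmt8_general (k d : ℕ) (hkd : k ≤ d) :
    let S : Finset (Fin d) := Finset.univ.filter fun j => (j : ℕ) < k
    let Dk : ℝ := (2 : ℝ) ^ (-(k : ℤ)) * ∑ r ∈ Finset.range ((k - 1) / 2 + 1),
      (k.choose r : ℝ) * ((k : ℝ) - 2 * r) * (-1) ^ r
    let Ck : ℝ := (2 : ℝ) ^ (-(k : ℤ)) * ∑ r ∈ Finset.range ((k - 1) / 2 + 1),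
      (k.choose r : ℝ) * ((k : ℝ) - 2 * r) ^ 2
    ∀ α : ℝ, 0 < α →
      Jfun d S (fun j => if (j : ℕ) < k then α else 0) = α * Dk ∧
      SigmaFun d (fun j => if (j : ℕ) < k then α else 0) = α ^ 2 * Ck ∧
      (Ck ≠ 0 →
        Jfun d S (fun j => if (j : ℕ) < k then α else 0) ^ 2 /
          SigmaFun d (fun j => if (j : ℕ) < k then α else 0) = Dk ^ 2 / Ck) := by
  intro S Dk Ck α hα
  have hcard : #S = k := Fin.card_filter_val_lt.trans (min_eq_right hkd)
  have hweight :
      (fun j : Fin d => if (j : ℕ) < k then α else 0) = fun j => if j ∈ S then α else 0 := by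
    simp [S]
  have hJ : Jfun d S (fun j => if (j : ℕ) < k then α else 0) = α * Dk := by
    rw [hweight, Jfun_indicator_eq S hα.le, hcard]
  have hSigma : SigmaFun d (fun j => if (j : ℕ) < k then α else 0) = α ^ 2 * Ck := by
    rw [hweight, SigmaFun_indicator_eq S hα.le, hcard]
  refine ⟨hJ, hSigma, fun _ => ?_⟩
  rw [hJ, hSigma, mul_pow, mul_div_mul_left _ _ (pow_ne_zero 2 hα.ne')]

theorem stmt8 (k d : ℕ) (hk : 1 ≤ k) (hkd : k ≤ d) :
    let S : Finset (Fin d) := Finset.univ.filter fun j => (j : ℕ) < k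
    let Dk : ℝ := (2 : ℝ) ^ (-(k : ℤ)) * ∑ r ∈ Finset.range ((k - 1) / 2 + 1),
      (k.choose r : ℝ) * ((k : ℝ) - 2 * r) * (-1) ^ r
    let Ck : ℝ := (2 : ℝ) ^ (-(k : ℤ)) * ∑ r ∈ Finset.range ((k - 1) / 2 + 1),
      (k.choose r : ℝ) * ((k : ℝ) - 2 * r) ^ 2
    ∀ α : ℝ, 0 < α →
      Jfun d S (fun j => if (j : ℕ) < k then α else 0) = α * Dk ∧
      SigmaFun d (fun j => if (j : ℕ) < k then α else 0) = α ^ 2 * Ck ∧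
      (Ck ≠ 0 →
        Jfun d S (fun j => if (j : ℕ) < k then α else 0) ^ 2 /
          SigmaFun d (fun j => if (j : ℕ) < k then α else 0) = Dk ^ 2 / Ck) :=
  stmt8_general k d hkd
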